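/- Fix d > 0 and α ∈ ℝ. Let N(α, d) be the number of κ > 0 such that there exists a nonzero twice continuously differentiable φ : [−d, d] → ℝ with φ″ = κ² φ on (−d, d) satisfying the symmetric Robin boundary conditions φ′(d) + α φ(d) = 0 and −φ′(−d) + α φ(−d) = 0 (equivalently, N(α,d) is the number of negative eigenvalues of the Robin Laplacian on (−d,d)). Then N(α, d) = 0 if α ≥ 0; N(α, d) = 1 if −1 ≤ α d < 0; and N(α, d) = 2 if α d < −1. -/

import Mathlib

/-- `φ : [−d,d] → ℝ` is a nonzero `C²` eigenfunction of the Robin Laplacian on `(−d,d)`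
with boundary constants `α₁, α₂`, satisfying `φ″ = lam·φ` on `(−d,d)` together with the
Robin boundary conditions `φ′(d) + α₁ φ(d) = 0` and `−φ′(−d) + α₂ φ(−d) = 0`
(one-sided derivatives at the endpoints). -/
def IsRobinEigenfunction (d α₁ α₂ lam : ℝ) (φ : ℝ → ℝ) : Prop :=
  ContDiffOn ℝ 2 φ (Set.Icc (-d) d) ∧
  (∃ u ∈ Set.Icc (-d) d, φ u ≠ 0) ∧
  (∀ u ∈ Set.Ioo (-d) d, deriv (deriv φ) u = lam * φ u) ∧
  derivWithin φ (Set.Icc (-d) d) d + α₁ * φ d = 0 ∧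
  -derivWithin φ (Set.Icc (-d) d) (-d) + α₂ * φ (-d) = 0

/-- The set of `κ > 0` such that `−κ²` is an eigenvalue of the symmetric Robin Laplacian
on `(−d,d)` with constant `α`. -/
def negEigSet (d α : ℝ) : Set ℝ :=
  {κ : ℝ | 0 < κ ∧ ∃ φ : ℝ → ℝ, IsRobinEigenfunction d α α (κ ^ 2) φ}

/-!
A solution of `φ'' = κ² φ` is `A cosh (κ u) + B sinh (κ u)`: the functions `φ' ± κ φ` solve
`y' = ± κ y`, so they are multiples of `exp (± κ u)`. For symmetric Robin conditions the sum and
difference of the two boundary conditions decouple into `A (κ sinh κd + α cosh κd) = 0` and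
`B (κ cosh κd + α sinh κd) = 0`, and the two brackets never vanish together. With `x = κ d` they
vanish iff `x tanh x = -αd`, resp. `x coth x = -αd`. On `(0, ∞)`, `x tanh x` increases bijectively
onto `(0, ∞)` and `x coth x` onto `(1, ∞)`, so the even equation has one root iff `αd < 0` and the
odd one iff `αd < -1`.
-/

open Real Set Topology

theorem eqOn_mul_exp_of_hasDerivAt {f : ℝ → ℝ} {c : ℝ} {s : Set ℝ} (hs : IsOpen s)
    (hs' : IsPreconnected s) (h0 : 0 ∈ s) (hf : ∀ u ∈ s, HasDerivAt f (c * f u) u) :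
    EqOn f (fun u => f 0 * exp (c * u)) s := by
  have hg : ∀ u ∈ s, HasDerivAt (fun v => f v * exp (-c * v)) 0 u := fun u hu =>
    ((hf u hu).mul ((hasDerivAt_id' u).const_mul (-c)).exp).congr_deriv (by ring)
  intro u hu
  have key := hs.is_const_of_deriv_eq_zero hs'
    (fun v hv => (hg v hv).differentiableAt.differentiableWithinAt) (fun v hv => (hg v hv).deriv)
    hu h0
  simp only [mul_zero, exp_zero, mul_one] at key
  calc f u = f u * exp (-c * u) * exp (c * u) := by
        rw [mul_assoc, ← exp_add, neg_mul, neg_add_cancel, exp_zero, mul_one]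
    _ = f 0 * exp (c * u) := by rw [key]

theorem eqOn_cosh_sinh_of_deriv_deriv_eq {φ : ℝ → ℝ} {κ : ℝ} {s : Set ℝ} (hs : IsOpen s)
    (hs' : IsPreconnected s) (h0 : 0 ∈ s) (hκ : κ ≠ 0) (hφ : ContDiffOn ℝ 2 φ s)
    (hode : ∀ u ∈ s, deriv (deriv φ) u = κ ^ 2 * φ u) :
    EqOn φ (fun u => φ 0 * cosh (κ * u) + deriv φ 0 / κ * sinh (κ * u)) s := by
  have hφ' : ∀ u ∈ s, HasDerivAt φ (deriv φ u) u := fun u hu =>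
    ((hφ.differentiableOn two_ne_zero).differentiableAt (hs.mem_nhds hu)).hasDerivAt
  have hφ'' : ∀ u ∈ s, HasDerivAt (deriv φ) (κ ^ 2 * φ u) u := fun u hu => hode u hu ▸
    (((hφ.deriv_of_isOpen (m := 1) hs (by norm_num)).differentiableOn one_ne_zero).differentiableAt
      (hs.mem_nhds hu)).hasDerivAt
  have hplus := eqOn_mul_exp_of_hasDerivAt hs hs' h0 (f := fun u => deriv φ u + κ * φ u)
    (c := κ) fun u hu => ((hφ'' u hu).add ((hφ' u hu).const_mul κ)).congr_deriv (by ring)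
  have hminus := eqOn_mul_exp_of_hasDerivAt hs hs' h0 (f := fun u => deriv φ u - κ * φ u)
    (c := -κ) fun u hu => ((hφ'' u hu).sub ((hφ' u hu).const_mul κ)).congr_deriv (by ring)
  intro u hu
  have hp : deriv φ u + κ * φ u = (deriv φ 0 + κ * φ 0) * exp (κ * u) := hplus hu
  have hm : deriv φ u - κ * φ u = (deriv φ 0 - κ * φ 0) * exp (-(κ * u)) := by
    rw [← neg_mul]; exact hminus hu
  simp only [cosh_eq, sinh_eq]
  field_simp
  linear_combination hp - hm

theorem Real.tanh_pos {x : ℝ} (hx : 0 < x) : 0 < tanh x := by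
  rw [tanh_eq_sinh_div_cosh]
  exact div_pos (sinh_pos_iff.2 hx) (cosh_pos x)

theorem Real.tanh_strictMono : StrictMono tanh := fun a b hab => by
  rw [tanh_eq_sinh_div_cosh, tanh_eq_sinh_div_cosh, div_lt_div_iff₀ (cosh_pos a) (cosh_pos b)]
  have h := sinh_neg_iff.2 (sub_neg.2 hab)
  rw [sinh_sub] at h
  linarith

theorem Real.continuous_tanh : Continuous tanh := by
  simp only [funext tanh_eq_sinh_div_cosh]
  exact continuous_sinh.div continuous_cosh fun x => (cosh_pos x).ne'

theorem Real.sinh_lt_mul_cosh {x : ℝ} (hx : 0 < x) : sinh x < x * cosh x := by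
  obtain ⟨ξ, hξ, hslope⟩ := exists_deriv_eq_slope sinh hx continuous_sinh.continuousOn
    differentiable_sinh.differentiableOn
  rw [deriv_sinh, sinh_zero, sub_zero, sub_zero, eq_div_iff hx.ne'] at hslope
  rw [← hslope, mul_comm]
  gcongr
  rw [cosh_lt_cosh, abs_of_pos hξ.1, abs_of_pos hx]
  exact hξ.2

theorem Real.tanh_lt_self {x : ℝ} (hx : 0 < x) : tanh x < x := by
  rw [tanh_eq_sinh_div_cosh, div_lt_iff₀ (cosh_pos x)]
  exact sinh_lt_mul_cosh hx

theorem strictMonoOn_mul_tanh : StrictMonoOn (fun x => x * tanh x) (Ioi 0) :=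
  fun _ ha _ _ hab => mul_lt_mul'' hab (tanh_strictMono hab) (le_of_lt ha) (tanh_pos ha).le

theorem strictMonoOn_div_tanh : StrictMonoOn (fun x => x / tanh x) (Ioi 0) := by
  have hcoth : (fun x => x / tanh x) = fun x => x * cosh x / sinh x := by
    simp only [tanh_eq_sinh_div_cosh, div_div_eq_mul_div]
  rw [hcoth]
  refine strictMonoOn_of_deriv_pos (convex_Ioi 0)
    (ContinuousOn.div (by fun_prop) (by fun_prop) fun x hx => (sinh_pos_iff.2 hx).ne') ?_
  rw [interior_Ioi]
  intro x (hx : 0 < x)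
  have hs := sinh_pos_iff.2 hx
  have hder : HasDerivAt (fun x => x * cosh x / sinh x) ((sinh x * cosh x - x) / sinh x ^ 2) x :=
    (((hasDerivAt_id' x).mul (hasDerivAt_cosh x)).div (hasDerivAt_sinh x) hs.ne').congr_deriv
      (by simp only [Pi.mul_apply]; congr 1; linear_combination (-x) * cosh_sq_sub_sinh_sq x)
  rw [hder.deriv]
  have h2x := self_lt_sinh_iff.2 (by linarith : 0 < 2 * x)
  rw [sinh_two_mul] at h2x
  exact div_pos (by linarith) (by positivity)

theorem image_mul_tanh_Ioi : (fun x => x * tanh x) '' Ioi 0 = Ioi 0 := by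
  refine Subset.antisymm (by rintro _ ⟨x, hx, rfl⟩; exact mul_pos hx (tanh_pos hx)) ?_
  intro a ha
  have hta := tanh_pos ha
  have hb : a ≤ a / tanh a := le_div_self ha.le hta (tanh_lt_one a).le
  have hlow : a * tanh a ≤ a := (mul_lt_of_lt_one_right ha (tanh_lt_one a)).le
  have hup : a ≤ a / tanh a * tanh (a / tanh a) :=
    calc a = a / tanh a * tanh a := by field_simp
      _ ≤ a / tanh a * tanh (a / tanh a) :=
        mul_le_mul_of_nonneg_left (tanh_strictMono.monotone hb) (div_pos ha hta).le
  obtain ⟨x, hx, hxa⟩ := intermediate_value_Icc hb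
    (continuous_id.mul continuous_tanh).continuousOn ⟨hlow, hup⟩
  exact ⟨x, ha.trans_le hx.1, hxa⟩

theorem image_div_tanh_Ioi : (fun x => x / tanh x) '' Ioi 0 = Ioi 1 := by
  refine Subset.antisymm
    (by rintro _ ⟨x, hx, rfl⟩; exact (one_lt_div (tanh_pos hx)).2 (tanh_lt_self hx)) ?_
  intro a (ha : 1 < a)
  -- the root lies between `arcosh a` (where `x / tanh x ≤ cosh x = a`) and `a`
  set x₀ := arcosh a
  have hx₀ : 0 < x₀ := arcosh_pos ha
  have hlow : x₀ / tanh x₀ ≤ a := by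
    rw [← cosh_arcosh ha.le, tanh_eq_sinh_div_cosh, div_div_eq_mul_div,
      div_le_iff₀ (sinh_pos_iff.2 hx₀), mul_comm (cosh x₀)]
    exact mul_le_mul_of_nonneg_right (self_lt_sinh_iff.2 hx₀).le (cosh_pos x₀).le
  have hup : a ≤ a / tanh a :=
    le_div_self (by linarith) (tanh_pos (by linarith)) (tanh_lt_one a).le
  have hpos : ∀ x ∈ uIcc x₀ a, 0 < x := fun x hx =>
    (lt_inf_iff.2 ⟨hx₀, by linarith⟩).trans_le hx.1
  obtain ⟨x, hx, hxa⟩ := intermediate_value_uIcc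
    (continuousOn_id.div continuous_tanh.continuousOn fun x hx => (tanh_pos (hpos x hx)).ne')
    (mem_uIcc_of_le hlow hup)
  exact ⟨x, hpos x hx, hxa⟩

open Classical in
theorem encard_setOf_pos_apply_mul_eq {g : ℝ → ℝ} (hg : InjOn g (Ioi 0)) {d : ℝ} (hd : 0 < d)
    (a : ℝ) : {κ | 0 < κ ∧ g (κ * d) = a}.encard = if a ∈ g '' Ioi 0 then 1 else 0 := by
  split_ifs with ha
  · obtain ⟨x, hx, rfl⟩ := ha
    refine encard_eq_one.2 ⟨x / d, Set.ext fun κ => ⟨fun ⟨hκ, h⟩ => ?_, ?_⟩⟩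
    · exact (eq_div_iff hd.ne').2 (hg (mul_pos hκ hd) hx h)
    · rintro rfl
      exact ⟨div_pos hx hd, by rw [div_mul_cancel₀ _ hd.ne']⟩
  · exact encard_eq_zero.2 <| eq_empty_of_forall_notMem fun κ ⟨hκ, h⟩ =>
      ha ⟨κ * d, mul_pos hκ hd, h⟩

theorem IsRobinEigenfunction.congr {d α₁ α₂ lam : ℝ} {φ ψ : ℝ → ℝ}
    (hφ : IsRobinEigenfunction d α₁ α₂ lam φ) (hd : 0 ≤ d) (h : EqOn φ ψ (Icc (-d) d)) :
    IsRobinEigenfunction d α₁ α₂ lam ψ := by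
  obtain ⟨hC, ⟨u, hu, hne⟩, hode, h₁, h₂⟩ := hφ
  have hd_mem : d ∈ Icc (-d) d := right_mem_Icc.2 (by linarith)
  have hnd_mem : -d ∈ Icc (-d) d := left_mem_Icc.2 (by linarith)
  refine ⟨hC.congr fun x hx => (h hx).symm, ⟨u, hu, h hu ▸ hne⟩, fun x hx => ?_, ?_, ?_⟩
  · have hφψ : φ =ᶠ[𝓝 x] ψ := h.eventuallyEq_of_mem (Icc_mem_nhds hx.1 hx.2)
    rw [← hφψ.deriv.deriv_eq, hode x hx, hφψ.eq_of_nhds]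
  · rwa [derivWithin_congr h.symm (h hd_mem).symm, ← h hd_mem]
  · rwa [derivWithin_congr h.symm (h hnd_mem).symm, ← h hnd_mem]

theorem IsRobinEigenfunction.eqOn_cosh_sinh {d α₁ α₂ κ : ℝ} {φ : ℝ → ℝ}
    (hφ : IsRobinEigenfunction d α₁ α₂ (κ ^ 2) φ) (hd : 0 < d) (hκ : κ ≠ 0) :
    EqOn φ (fun u => φ 0 * cosh (κ * u) + deriv φ 0 / κ * sinh (κ * u)) (Icc (-d) d) :=
  (eqOn_cosh_sinh_of_deriv_deriv_eq isOpen_Ioo isPreconnected_Ioo ⟨by linarith, hd⟩ hκ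
      (hφ.1.mono Ioo_subset_Icc_self) hφ.2.2.1).of_subset_closure
    hφ.1.continuousOn (by fun_prop) Ioo_subset_Icc_self
    (closure_Ioo (by linarith)).ge

-- `φ'(d) + α φ(d)` for `φ u = cosh (κ u)`, resp. `φ u = sinh (κ u)`.
noncomputable def robinEven (d α κ : ℝ) : ℝ := κ * sinh (κ * d) + α * cosh (κ * d)

noncomputable def robinOdd (d α κ : ℝ) : ℝ := κ * cosh (κ * d) + α * sinh (κ * d)

theorem hasDerivAt_cosh_add_sinh (A B κ u : ℝ) :
    HasDerivAt (fun u => A * cosh (κ * u) + B * sinh (κ * u))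
      (κ * (A * sinh (κ * u) + B * cosh (κ * u))) u := by
  have hlin := (hasDerivAt_id' u).const_mul κ
  exact ((hlin.cosh.const_mul A).add (hlin.sinh.const_mul B)).congr_deriv (by ring)

theorem deriv_deriv_cosh_add_sinh (A B κ u : ℝ) :
    deriv (deriv fun u => A * cosh (κ * u) + B * sinh (κ * u)) u =
      κ ^ 2 * (A * cosh (κ * u) + B * sinh (κ * u)) := by
  have hderiv : deriv (fun u => A * cosh (κ * u) + B * sinh (κ * u)) =
      fun u => (κ * B) * cosh (κ * u) + (κ * A) * sinh (κ * u) :=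
    funext fun u => (hasDerivAt_cosh_add_sinh A B κ u).deriv.trans (by ring)
  rw [hderiv, (hasDerivAt_cosh_add_sinh _ _ κ u).deriv]
  ring

theorem exists_mem_Icc_cosh_add_sinh_ne_zero_iff {d κ A B : ℝ} (hd : 0 < d) (hκ : κ ≠ 0) :
    (∃ u ∈ Icc (-d) d, A * cosh (κ * u) + B * sinh (κ * u) ≠ 0) ↔ A ≠ 0 ∨ B ≠ 0 := by
  refine ⟨fun ⟨u, _, hu⟩ => ?_, fun hAB => ?_⟩
  · by_contra! hAB
    simp [hAB.1, hAB.2] at hu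
  · by_cases hA : A = 0
    · exact ⟨d, right_mem_Icc.2 (by linarith),
        by simp [hA, hAB.resolve_left (not_not.2 hA), hκ, hd.ne']⟩
    · exact ⟨0, ⟨by linarith, hd.le⟩, by simpa using hA⟩

theorem isRobinEigenfunction_cosh_add_sinh_iff {d α₁ α₂ κ A B : ℝ} (hd : 0 < d) (hκ : κ ≠ 0) :
    IsRobinEigenfunction d α₁ α₂ (κ ^ 2) (fun u => A * cosh (κ * u) + B * sinh (κ * u)) ↔
      (A ≠ 0 ∨ B ≠ 0) ∧ A * robinEven d α₁ κ + B * robinOdd d α₁ κ = 0 ∧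
        A * robinEven d α₂ κ - B * robinOdd d α₂ κ = 0 := by
  set φ : ℝ → ℝ := fun u => A * cosh (κ * u) + B * sinh (κ * u)
  have hbd : ∀ u ∈ Icc (-d) d,
      derivWithin φ (Icc (-d) d) u = κ * (A * sinh (κ * u) + B * cosh (κ * u)) := fun u hu =>
    (hasDerivAt_cosh_add_sinh A B κ u).hasDerivWithinAt.derivWithin
      (uniqueDiffOn_Icc (by linarith) u hu)
  have h₁ : derivWithin φ (Icc (-d) d) d + α₁ * φ d =
      A * robinEven d α₁ κ + B * robinOdd d α₁ κ := by
    rw [hbd d (right_mem_Icc.2 (by linarith))]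
    simp only [φ, robinEven, robinOdd]
    ring
  have h₂ : -derivWithin φ (Icc (-d) d) (-d) + α₂ * φ (-d) =
      A * robinEven d α₂ κ - B * robinOdd d α₂ κ := by
    rw [hbd (-d) (left_mem_Icc.2 (by linarith))]
    simp only [φ, robinEven, robinOdd, mul_neg, sinh_neg, cosh_neg]
    ring
  have hne := exists_mem_Icc_cosh_add_sinh_ne_zero_iff (A := A) (B := B) hd hκ
  exact ⟨fun ⟨_, hφ, _, e₁, e₂⟩ => ⟨hne.1 hφ, h₁.symm.trans e₁, h₂.symm.trans e₂⟩,
    fun ⟨hAB, e₁, e₂⟩ => ⟨by fun_prop, hne.2 hAB, fun u _ => deriv_deriv_cosh_add_sinh A B κ u,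
      h₁.trans e₁, h₂.trans e₂⟩⟩

theorem mem_negEigSet_iff {d α κ : ℝ} (hd : 0 < d) :
    κ ∈ negEigSet d α ↔ 0 < κ ∧ (robinEven d α κ = 0 ∨ robinOdd d α κ = 0) := by
  refine ⟨fun ⟨hκ, φ, hφ⟩ => ⟨hκ, ?_⟩, fun ⟨hκ, h⟩ => ⟨hκ, ?_⟩⟩
  · obtain ⟨hAB, h₁, h₂⟩ := (isRobinEigenfunction_cosh_add_sinh_iff hd hκ.ne').1
      (hφ.congr hd.le (hφ.eqOn_cosh_sinh hd hκ.ne'))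
    have hA : φ 0 * robinEven d α κ = 0 := by linarith
    have hB : deriv φ 0 / κ * robinOdd d α κ = 0 := by linarith
    rcases hAB with hA' | hB'
    · exact .inl ((mul_eq_zero.1 hA).resolve_left hA')
    · exact .inr ((mul_eq_zero.1 hB).resolve_left hB')
  · rcases h with h | h
    · exact ⟨_, (isRobinEigenfunction_cosh_add_sinh_iff (A := 1) (B := 0) hd hκ.ne').2
        ⟨by simp, by simp [h], by simp [h]⟩⟩
    · exact ⟨_, (isRobinEigenfunction_cosh_add_sinh_iff (A := 0) (B := 1) hd hκ.ne').2
        ⟨by simp, by simp [h], by simp [h]⟩⟩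

theorem negEigSet_eq_union {d α : ℝ} (hd : 0 < d) :
    negEigSet d α =
      {κ | 0 < κ ∧ robinEven d α κ = 0} ∪ {κ | 0 < κ ∧ robinOdd d α κ = 0} := by
  ext κ
  exact (mem_negEigSet_iff hd).trans and_or_left

theorem sinh_mul_robinEven_sub_cosh_mul_robinOdd (d α κ : ℝ) :
    sinh (κ * d) * robinEven d α κ - cosh (κ * d) * robinOdd d α κ = -κ := by
  unfold robinEven robinOdd
  linear_combination (-κ) * cosh_sq_sub_sinh_sq (κ * d)

theorem disjoint_robinEven_robinOdd_zeros (d α : ℝ) :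
    Disjoint {κ | 0 < κ ∧ robinEven d α κ = 0} {κ | 0 < κ ∧ robinOdd d α κ = 0} := by
  refine Set.disjoint_left.2 fun κ ⟨hκ, hE⟩ ⟨_, hO⟩ => hκ.ne' ?_
  simpa [hE, hO] using sinh_mul_robinEven_sub_cosh_mul_robinOdd d α κ

theorem robinEven_eq_zero_iff {d α κ : ℝ} (hd : d ≠ 0) :
    robinEven d α κ = 0 ↔ κ * d * tanh (κ * d) = -(α * d) := by
  have hc := (cosh_pos (κ * d)).ne'
  have key : κ * d * tanh (κ * d) + α * d = d * robinEven d α κ / cosh (κ * d) := by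
    rw [tanh_eq_sinh_div_cosh, robinEven]
    field_simp
  rw [eq_neg_iff_add_eq_zero, key, div_eq_zero_iff, mul_eq_zero]
  simp [hd, hc]

theorem robinOdd_eq_zero_iff {d α κ : ℝ} (hκd : κ * d ≠ 0) :
    robinOdd d α κ = 0 ↔ κ * d / tanh (κ * d) = -(α * d) := by
  have hs : sinh (κ * d) ≠ 0 := sinh_ne_zero.2 hκd
  have hd : d ≠ 0 := right_ne_zero_of_mul hκd
  have key : κ * d / tanh (κ * d) + α * d = d * robinOdd d α κ / sinh (κ * d) := by
    rw [tanh_eq_sinh_div_cosh, robinOdd]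
    field_simp
  rw [eq_neg_iff_add_eq_zero, key, div_eq_zero_iff, mul_eq_zero]
  simp [hd, hs]

theorem encard_setOf_robinEven_eq_zero {d α : ℝ} (hd : 0 < d) :
    {κ | 0 < κ ∧ robinEven d α κ = 0}.encard = if α * d < 0 then 1 else 0 := by
  have hset : {κ | 0 < κ ∧ robinEven d α κ = 0} =
      {κ | 0 < κ ∧ (fun x => x * tanh x) (κ * d) = -(α * d)} := by
    simp only [robinEven_eq_zero_iff hd.ne']
  rw [hset, encard_setOf_pos_apply_mul_eq strictMonoOn_mul_tanh.injOn hd, image_mul_tanh_Ioi]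
  simp only [mem_Ioi, neg_pos]

theorem encard_setOf_robinOdd_eq_zero {d α : ℝ} (hd : 0 < d) :
    {κ | 0 < κ ∧ robinOdd d α κ = 0}.encard = if α * d < -1 then 1 else 0 := by
  have hset : {κ | 0 < κ ∧ robinOdd d α κ = 0} =
      {κ | 0 < κ ∧ (fun x => x / tanh x) (κ * d) = -(α * d)} :=
    Set.ext fun κ => and_congr_right fun hκ => robinOdd_eq_zero_iff (mul_pos hκ hd).ne'
  rw [hset, encard_setOf_pos_apply_mul_eq strictMonoOn_div_tanh.injOn hd, image_div_tanh_Ioi]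
  simp only [mem_Ioi, lt_neg]

/-- The number of negative eigenvalues of the symmetric Robin Laplacian on
`(−d,d)` is `0` if `α ≥ 0`, `1` if `−1 ≤ αd < 0`, and `2` if `αd < −1`. -/
theorem number_of_negative_robin_eigenvalues
    (d α : ℝ) (hd : 0 < d) :
    (negEigSet d α).Finite ∧
    (0 ≤ α → (negEigSet d α).ncard = 0) ∧
    (-1 ≤ α * d → α * d < 0 → (negEigSet d α).ncard = 1) ∧
    (α * d < -1 → (negEigSet d α).ncard = 2) := by
  have hcount : (negEigSet d α).encard =
      (if α * d < 0 then 1 else 0) + (if α * d < -1 then 1 else 0) := by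
    rw [negEigSet_eq_union hd, encard_union_eq (disjoint_robinEven_robinOdd_zeros d α),
      encard_setOf_robinEven_eq_zero hd, encard_setOf_robinOdd_eq_zero hd]
  refine ⟨encard_ne_top_iff.1 (by rw [hcount]; split_ifs <;> decide), fun hα => ?_,
    fun h₁ h₂ => ?_, fun h => ?_⟩
  all_goals rw [ncard_def, hcount]
  · have hαd := mul_nonneg hα hd.le
    rw [if_neg hαd.not_gt, if_neg (by linarith)]; rfl
  · rw [if_pos h₂, if_neg h₁.not_gt]; rfl
  · rw [if_pos (by linarith), if_pos h]; rfl
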